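/- For every n ≥ 0 and all z, w ∈ ℂ with z ≠ w, the Poisson brackets {A_n(z), B_n(w)} = −(i·w/(z−w))·(A_n(z)·B_n(w) − A_n(w)·B_n(z)) and {A_n(z), B_n^*(w)} = (i·z/(z−w))·(A_n(z)·B_n^*(w) − A_n(w)·B_n^*(z)). -/

import Mathlib

open Complex

/-- Derivative of `f` in the direction of the real part of the `k`-th variable α_k. -/
noncomputable def duDeriv (k : ℕ) (f : (ℕ → ℂ) → ℂ) (a : ℕ → ℂ) : ℂ :=
  deriv (fun t : ℝ => f (Function.update a k (a k + (t : ℂ)))) 0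

/-- Derivative of `f` in the direction of the imaginary part of the `k`-th variable α_k. -/
noncomputable def dvDeriv (k : ℕ) (f : (ℕ → ℂ) → ℂ) (a : ℕ → ℂ) : ℂ :=
  deriv (fun t : ℝ => f (Function.update a k (a k + (t : ℂ) * Complex.I))) 0

/-- Wirtinger derivative ∂f/∂α_k = (1/2)(∂/∂u_k − i·∂/∂v_k). -/
noncomputable def dAlpha (k : ℕ) (f : (ℕ → ℂ) → ℂ) (a : ℕ → ℂ) : ℂ :=
  (1 / 2) * (duDeriv k f a - Complex.I * dvDeriv k f a)

/-- Wirtinger derivative ∂f/∂conj(α_k) = (1/2)(∂/∂u_k + i·∂/∂v_k). -/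
noncomputable def dAlphaBar (k : ℕ) (f : (ℕ → ℂ) → ℂ) (a : ℕ → ℂ) : ℂ :=
  (1 / 2) * (duDeriv k f a + Complex.I * dvDeriv k f a)

/-- The Poisson bracket
{f,g} = i·Σ_k (1 − |α_k|²)·[(∂f/∂conj(α_k))·(∂g/∂α_k) − (∂f/∂α_k)·(∂g/∂conj(α_k))]. -/
noncomputable def pb (f g : (ℕ → ℂ) → ℂ) (a : ℕ → ℂ) : ℂ :=
  Complex.I * ∑' k : ℕ, (1 - (Complex.normSq (a k) : ℂ)) *
    (dAlphaBar k f a * dAlpha k g a - dAlpha k f a * dAlphaBar k g a)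

/-- The quadruple ((A_n(z), B_n(z)), (A_n^*(z), B_n^*(z))) of Wall polynomials:
A_0(z) = α_0, B_0(z) = 1, A_0^*(z) = conj(α_0), B_0^*(z) = 1,
A_{n+1}(z) = A_n(z) + α_{n+1}·z·B_n^*(z), B_{n+1}(z) = B_n(z) + α_{n+1}·z·A_n^*(z),
A_{n+1}^*(z) = z·A_n^*(z) + conj(α_{n+1})·B_n(z),
B_{n+1}^*(z) = z·B_n^*(z) + conj(α_{n+1})·A_n(z). -/
noncomputable def WallP : ℕ → ℂ → (ℕ → ℂ) → (ℂ × ℂ) × ℂ × ℂ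
  | 0, _, a => ((a 0, 1), (starRingEnd ℂ) (a 0), 1)
  | n + 1, z, a =>
      (((WallP n z a).1.1 + a (n + 1) * z * (WallP n z a).2.2,
        (WallP n z a).1.2 + a (n + 1) * z * (WallP n z a).2.1),
       z * (WallP n z a).2.1 + (starRingEnd ℂ) (a (n + 1)) * (WallP n z a).1.2,
       z * (WallP n z a).2.2 + (starRingEnd ℂ) (a (n + 1)) * (WallP n z a).1.1)

/-- The Wall polynomial A_n(z). -/
noncomputable def WallA (n : ℕ) (z : ℂ) (a : ℕ → ℂ) : ℂ := (WallP n z a).1.1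

/-- The Wall polynomial B_n(z). -/
noncomputable def WallB (n : ℕ) (z : ℂ) (a : ℕ → ℂ) : ℂ := (WallP n z a).1.2

/-- The reversed Wall polynomial A_n^*(z). -/
noncomputable def WallAStar (n : ℕ) (z : ℂ) (a : ℕ → ℂ) : ℂ := (WallP n z a).2.1

/-- The reversed Wall polynomial B_n^*(z). -/
noncomputable def WallBStar (n : ℕ) (z : ℂ) (a : ℕ → ℂ) : ℂ := (WallP n z a).2.2

/-- `f` is affine in slot `k` around `a`, with Wirtinger coefficients `c1, c2`. -/
def HasW (k : ℕ) (f : (ℕ → ℂ) → ℂ) (a : ℕ → ℂ) (c1 c2 : ℂ) : Prop :=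
  ∀ x : ℂ, f (Function.update a k x) =
    f a + c1 * (x - a k) + c2 * ((starRingEnd ℂ) x - (starRingEnd ℂ) (a k))

namespace HasW

variable {k : ℕ} {f g : (ℕ → ℂ) → ℂ} {a : ℕ → ℂ} {c1 c2 d1 d2 : ℂ}

lemma du (h : HasW k f a c1 c2) : duDeriv k f a = c1 + c2 := by
  unfold duDeriv
  have hfun : (fun t : ℝ => f (Function.update a k (a k + (t : ℂ))))
      = fun t : ℝ => f a + (c1 + c2) * (t : ℂ) := by
    funext t
    rw [h (a k + (t : ℂ)), map_add, Complex.conj_ofReal]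
    ring
  rw [hfun]
  have hd : HasDerivAt (fun t : ℝ => f a + (c1 + c2) * (t : ℂ)) (c1 + c2) (0 : ℝ) := by
    simpa using (Complex.ofRealCLM.hasDerivAt (x := (0:ℝ))).const_mul (c1 + c2) |>.const_add (f a)
  exact hd.deriv

lemma dv (h : HasW k f a c1 c2) : dvDeriv k f a = (c1 - c2) * Complex.I := by
  unfold dvDeriv
  have hfun : (fun t : ℝ => f (Function.update a k (a k + (t : ℂ) * Complex.I)))
      = fun t : ℝ => f a + ((c1 - c2) * Complex.I) * (t : ℂ) := by
    funext t
    rw [h (a k + (t : ℂ) * Complex.I), map_add, map_mul, Complex.conj_ofReal, Complex.conj_I]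
    ring
  rw [hfun]
  have hd : HasDerivAt (fun t : ℝ => f a + ((c1 - c2) * Complex.I) * (t : ℂ))
      ((c1 - c2) * Complex.I) (0 : ℝ) := by
    simpa using (Complex.ofRealCLM.hasDerivAt (x := (0:ℝ))).const_mul ((c1 - c2) * Complex.I)
      |>.const_add (f a)
  exact hd.deriv

lemma dAlpha_eq (h : HasW k f a c1 c2) : dAlpha k f a = c1 := by
  unfold dAlpha
  rw [h.du, h.dv]
  have : Complex.I * Complex.I = -1 := Complex.I_mul_I
  linear_combination (1/2 : ℂ) * (c2 - c1) * this

lemma dAlphaBar_eq (h : HasW k f a c1 c2) : dAlphaBar k f a = c2 := by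
  unfold dAlphaBar
  rw [h.du, h.dv]
  linear_combination (1/2 : ℂ) * (c1 - c2) * Complex.I_mul_I

lemma add (hf : HasW k f a c1 c2) (hg : HasW k g a d1 d2) :
    HasW k (fun b => f b + g b) a (c1 + d1) (c2 + d2) := by
  intro x
  simp only
  rw [hf x, hg x]; ring

lemma const_mul (c : ℂ) (hf : HasW k f a c1 c2) :
    HasW k (fun b => c * f b) a (c * c1) (c * c2) := by
  intro x
  simp only
  rw [hf x]; ring

lemma mul_const (hf : HasW k f a c1 c2) (c : ℂ) :
    HasW k (fun b => f b * c) a (c1 * c) (c2 * c) := by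
  intro x
  simp only
  rw [hf x]; ring

lemma mul (hf : HasW k f a c1 c2) (hg : HasW k g a d1 d2)
    (h11 : c1 * d1 = 0) (h12 : c1 * d2 = 0) (h21 : c2 * d1 = 0) (h22 : c2 * d2 = 0) :
    HasW k (fun b => f b * g b) a (f a * d1 + c1 * g a) (f a * d2 + c2 * g a) := by
  intro x
  simp only
  rw [hf x, hg x]
  linear_combination (x - a k)^2 * h11
    + (x - a k) * ((starRingEnd ℂ) x - (starRingEnd ℂ) (a k)) * (h12 + h21)
    + ((starRingEnd ℂ) x - (starRingEnd ℂ) (a k))^2 * h22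

lemma congr (hf : HasW k f a c1 c2) {c1' c2' : ℂ} (h1 : c1 = c1') (h2 : c2 = c2') :
    HasW k f a c1' c2' := h1 ▸ h2 ▸ hf

end HasW

lemma hasW_const (k : ℕ) (a : ℕ → ℂ) (c : ℂ) : HasW k (fun _ => c) a 0 0 := by
  intro x; simp

lemma hasW_coord (k m : ℕ) (a : ℕ → ℂ) :
    HasW k (fun b => b m) a (if k = m then 1 else 0) 0 := by
  intro x
  by_cases h : k = m
  · subst h
    simp [Function.update_self]
  · simp only [Function.update_apply, if_neg (fun hm : m = k => h hm.symm), if_neg h]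
    ring

lemma hasW_conj (k m : ℕ) (a : ℕ → ℂ) :
    HasW k (fun b => (starRingEnd ℂ) (b m)) a 0 (if k = m then 1 else 0) := by
  intro x
  by_cases h : k = m
  · subst h
    simp [Function.update_self]
  · simp only [Function.update_apply, if_neg (fun hm : m = k => h hm.symm), if_neg h]
    ring

/-- Wirtinger derivative data of the Wall polynomials: for each of the four
polynomials, the pair (∂/∂α_k, ∂/∂conj α_k). Layout mirrors `WallP`. -/
noncomputable def WD (k : ℕ) : ℕ → ℂ → (ℕ → ℂ) → ((ℂ × ℂ) × (ℂ × ℂ)) × ((ℂ × ℂ) × (ℂ × ℂ))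
  | 0, _, _ => (((if k = 0 then 1 else 0, 0), (0, 0)), ((0, if k = 0 then 1 else 0), (0, 0)))
  | n + 1, z, a =>
      ((((WD k n z a).1.1.1 + z * ((if k = n + 1 then 1 else 0) * (WallP n z a).2.2
            + a (n + 1) * (WD k n z a).2.2.1),
         (WD k n z a).1.1.2 + z * a (n + 1) * (WD k n z a).2.2.2),
        ((WD k n z a).1.2.1 + z * ((if k = n + 1 then 1 else 0) * (WallP n z a).2.1
            + a (n + 1) * (WD k n z a).2.1.1),
         (WD k n z a).1.2.2 + z * a (n + 1) * (WD k n z a).2.1.2)),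
       ((z * (WD k n z a).2.1.1 + (starRingEnd ℂ) (a (n + 1)) * (WD k n z a).1.2.1,
         z * (WD k n z a).2.1.2 + (if k = n + 1 then 1 else 0) * (WallP n z a).1.2
            + (starRingEnd ℂ) (a (n + 1)) * (WD k n z a).1.2.2),
        (z * (WD k n z a).2.2.1 + (starRingEnd ℂ) (a (n + 1)) * (WD k n z a).1.1.1,
         z * (WD k n z a).2.2.2 + (if k = n + 1 then 1 else 0) * (WallP n z a).1.1
            + (starRingEnd ℂ) (a (n + 1)) * (WD k n z a).1.1.2)))

lemma WD_zero (n k : ℕ) (h : n < k) (z : ℂ) (a : ℕ → ℂ) :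
    WD k n z a = (((0, 0), (0, 0)), ((0, 0), (0, 0))) := by
  induction n with
  | zero =>
      have hk : ¬ k = 0 := by omega
      simp [WD, hk]
  | succ n ih =>
      have hk : ¬ k = n + 1 := by omega
      have h2 := ih (by omega)
      simp [WD, hk, h2]

lemma hasW_wall (n : ℕ) (z : ℂ) (k : ℕ) (a : ℕ → ℂ) :
    HasW k (fun b => (WallP n z b).1.1) a (WD k n z a).1.1.1 (WD k n z a).1.1.2 ∧
    HasW k (fun b => (WallP n z b).1.2) a (WD k n z a).1.2.1 (WD k n z a).1.2.2 ∧
    HasW k (fun b => (WallP n z b).2.1) a (WD k n z a).2.1.1 (WD k n z a).2.1.2 ∧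
    HasW k (fun b => (WallP n z b).2.2) a (WD k n z a).2.2.1 (WD k n z a).2.2.2 := by
  induction n with
  | zero =>
      refine ⟨?_, ?_, ?_, ?_⟩ <;> simp only [WallP, WD]
      · exact hasW_coord k 0 a
      · exact hasW_const k a 1
      · exact hasW_conj k 0 a
      · exact hasW_const k a 1
  | succ n ih =>
      obtain ⟨hA, hB, hAs, hBs⟩ := ih
      have hz : k = n + 1 → WD k n z a = (((0, 0), (0, 0)), ((0, 0), (0, 0))) :=
        fun h => WD_zero n k (by omega) z a
      have hco : HasW k (fun b => b (n + 1) * z) a ((if k = n + 1 then 1 else 0) * z) (0 * z) :=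
        (hasW_coord k (n + 1) a).mul_const z
      have hcj := hasW_conj k (n + 1) a
      refine ⟨?_, ?_, ?_, ?_⟩ <;> simp only [WallP, WD]
      · refine (hA.add (hco.mul hBs ?_ ?_ ?_ ?_)).congr (by ring) (by ring) <;>
          first
          | (split_ifs with h
             · rw [hz h]; simp
             · simp)
          | simp
      · refine (hB.add (hco.mul hAs ?_ ?_ ?_ ?_)).congr (by ring) (by ring) <;>
          first
          | (split_ifs with h
             · rw [hz h]; simp
             · simp)
          | simp
      · refine ((hAs.const_mul z).add (hcj.mul hB ?_ ?_ ?_ ?_)).congr (by ring) (by ring) <;>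
          first
          | (split_ifs with h
             · rw [hz h]; simp
             · simp)
          | simp
      · refine ((hBs.const_mul z).add (hcj.mul hA ?_ ?_ ?_ ?_)).congr (by ring) (by ring) <;>
          first
          | (split_ifs with h
             · rw [hz h]; simp
             · simp)
          | simp

noncomputable def dWA (n : ℕ) (z : ℂ) (a : ℕ → ℂ) (k : ℕ) : ℂ × ℂ := (WD k n z a).1.1
noncomputable def dWB (n : ℕ) (z : ℂ) (a : ℕ → ℂ) (k : ℕ) : ℂ × ℂ := (WD k n z a).1.2
noncomputable def dWAs (n : ℕ) (z : ℂ) (a : ℕ → ℂ) (k : ℕ) : ℂ × ℂ := (WD k n z a).2.1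
noncomputable def dWBs (n : ℕ) (z : ℂ) (a : ℕ → ℂ) (k : ℕ) : ℂ × ℂ := (WD k n z a).2.2

lemma dAlpha_A (n : ℕ) (z : ℂ) (k : ℕ) (a : ℕ → ℂ) :
    dAlpha k (WallA n z) a = (dWA n z a k).1 := ((hasW_wall n z k a).1).dAlpha_eq
lemma dAlphaBar_A (n : ℕ) (z : ℂ) (k : ℕ) (a : ℕ → ℂ) :
    dAlphaBar k (WallA n z) a = (dWA n z a k).2 := ((hasW_wall n z k a).1).dAlphaBar_eq
lemma dAlpha_B (n : ℕ) (z : ℂ) (k : ℕ) (a : ℕ → ℂ) :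
    dAlpha k (WallB n z) a = (dWB n z a k).1 := ((hasW_wall n z k a).2.1).dAlpha_eq
lemma dAlphaBar_B (n : ℕ) (z : ℂ) (k : ℕ) (a : ℕ → ℂ) :
    dAlphaBar k (WallB n z) a = (dWB n z a k).2 := ((hasW_wall n z k a).2.1).dAlphaBar_eq
lemma dAlpha_Bs (n : ℕ) (z : ℂ) (k : ℕ) (a : ℕ → ℂ) :
    dAlpha k (WallBStar n z) a = (dWBs n z a k).1 := ((hasW_wall n z k a).2.2.2).dAlpha_eq
lemma dAlphaBar_Bs (n : ℕ) (z : ℂ) (k : ℕ) (a : ℕ → ℂ) :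
    dAlphaBar k (WallBStar n z) a = (dWBs n z a k).2 := ((hasW_wall n z k a).2.2.2).dAlphaBar_eq

/-- The truncated Poisson-bracket sum. -/
noncomputable def Sm (n : ℕ) (a : ℕ → ℂ) (f g : ℕ → ℂ × ℂ) : ℂ :=
  ∑ k ∈ Finset.range (n + 1), (1 - (Complex.normSq (a k) : ℂ)) *
    ((f k).2 * (g k).1 - (f k).1 * (g k).2)

lemma Sm_succ (n : ℕ) (a : ℕ → ℂ) (f g : ℕ → ℂ × ℂ) :
    Sm (n + 1) a f g = Sm n a f g + (1 - (Complex.normSq (a (n + 1)) : ℂ)) *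
      ((f (n + 1)).2 * (g (n + 1)).1 - (f (n + 1)).1 * (g (n + 1)).2) :=
  Finset.sum_range_succ _ _

lemma pb_AB (n : ℕ) (z w : ℂ) (a : ℕ → ℂ) :
    pb (WallA n z) (WallB n w) a = Complex.I * Sm n a (dWA n z a) (dWB n w a) := by
  unfold pb
  congr 1
  have hc : ∀ k, (1 - (Complex.normSq (a k) : ℂ)) *
      (dAlphaBar k (WallA n z) a * dAlpha k (WallB n w) a
        - dAlpha k (WallA n z) a * dAlphaBar k (WallB n w) a)
      = (1 - (Complex.normSq (a k) : ℂ)) *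
      ((dWA n z a k).2 * (dWB n w a k).1 - (dWA n z a k).1 * (dWB n w a k).2) := by
    intro k
    rw [dAlpha_A, dAlphaBar_A, dAlpha_B, dAlphaBar_B]
  rw [tsum_congr hc]
  simp only [Sm]
  refine tsum_eq_sum fun k hk => ?_
  have hk' : n < k := by simpa using Finset.mem_range.not.mp hk
  simp [dWA, dWB, WD_zero n k hk']

lemma pb_ABs (n : ℕ) (z w : ℂ) (a : ℕ → ℂ) :
    pb (WallA n z) (WallBStar n w) a = Complex.I * Sm n a (dWA n z a) (dWBs n w a) := by
  unfold pb
  congr 1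
  have hc : ∀ k, (1 - (Complex.normSq (a k) : ℂ)) *
      (dAlphaBar k (WallA n z) a * dAlpha k (WallBStar n w) a
        - dAlpha k (WallA n z) a * dAlphaBar k (WallBStar n w) a)
      = (1 - (Complex.normSq (a k) : ℂ)) *
      ((dWA n z a k).2 * (dWBs n w a k).1 - (dWA n z a k).1 * (dWBs n w a k).2) := by
    intro k
    rw [dAlpha_A, dAlphaBar_A, dAlpha_Bs, dAlphaBar_Bs]
  rw [tsum_congr hc]
  simp only [Sm]
  refine tsum_eq_sum fun k hk => ?_
  have hk' : n < k := by simpa using Finset.mem_range.not.mp hk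
  simp [dWA, dWBs, WD_zero n k hk']

lemma wall_key (a : ℕ → ℂ) : ∀ (n : ℕ) (z w : ℂ),
    (z - w) * Sm n a (dWA n z a) (dWA n w a) = 0 ∧
    (z - w) * Sm n a (dWB n z a) (dWB n w a) = 0 ∧
    (z - w) * Sm n a (dWAs n z a) (dWAs n w a) = 0 ∧
    (z - w) * Sm n a (dWBs n z a) (dWBs n w a) = 0 ∧
    (z - w) * Sm n a (dWA n z a) (dWB n w a) = -w * ((WallP n z a).1.1 * (WallP n w a).1.2 - (WallP n w a).1.1 * (WallP n z a).1.2) ∧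
    (z - w) * Sm n a (dWA n z a) (dWBs n w a) = z * ((WallP n z a).1.1 * (WallP n w a).2.2 - (WallP n w a).1.1 * (WallP n z a).2.2) ∧
    (z - w) * Sm n a (dWB n z a) (dWAs n w a) = z * ((WallP n z a).1.2 * (WallP n w a).2.1 - (WallP n w a).1.2 * (WallP n z a).2.1) ∧
    (z - w) * Sm n a (dWAs n z a) (dWBs n w a) = -z * ((WallP n z a).2.1 * (WallP n w a).2.2 - (WallP n w a).2.1 * (WallP n z a).2.2) ∧
    (z - w) * Sm n a (dWA n z a) (dWAs n w a) = (z - w) * ((WallP n z a).1.1 * (WallP n w a).2.1) - z * ((WallP n w a).1.2 * (WallP n z a).2.2) + w * ((WallP n z a).1.2 * (WallP n w a).2.2) ∧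
    (z - w) * Sm n a (dWB n z a) (dWBs n w a) = z * ((WallP n z a).1.1 * (WallP n w a).2.1 - (WallP n w a).1.1 * (WallP n z a).2.1) := by
  intro n
  induction n with
  | zero =>
      intro z w
      have mc := Complex.mul_conj (a 0)
      refine ⟨?_, ?_, ?_, ?_, ?_, ?_, ?_, ?_, ?_, ?_⟩ <;>
        simp only [Sm, zero_add, Finset.range_one, Finset.sum_singleton, dWA, dWB, dWAs, dWBs,
          WD, WallP, if_true]
      case _ => linear_combination (0 : ℂ) * mc
      case _ => linear_combination (0 : ℂ) * mc
      case _ => linear_combination (0 : ℂ) * mc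
      case _ => linear_combination (0 : ℂ) * mc
      case _ => linear_combination (0 : ℂ) * mc
      case _ => linear_combination (0 : ℂ) * mc
      case _ => linear_combination (0 : ℂ) * mc
      case _ => linear_combination (0 : ℂ) * mc
      case _ => linear_combination ((w - z) : ℂ) * mc
      case _ => linear_combination (0 : ℂ) * mc
  | succ n ih =>
      intro z w
      obtain ⟨h1, h2, h3, h4, h5, h6, h7, h8, h9, h10⟩ := ih z w
      obtain ⟨g1, g2, g3, g4, g5, g6, g7, g8, g9, g10⟩ := ih w z
      have mc := Complex.mul_conj (a (n+1))
      have lA : ∀ v : ℂ, dWA (n+1) v a (n+1) = (v * (WallP n v a).2.2, 0) := by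
        intro v
        simp [dWA, WD, WD_zero n (n+1) (Nat.lt_succ_self n) v a]
      have lB : ∀ v : ℂ, dWB (n+1) v a (n+1) = (v * (WallP n v a).2.1, 0) := by
        intro v
        simp [dWB, WD, WD_zero n (n+1) (Nat.lt_succ_self n) v a]
      have lAs : ∀ v : ℂ, dWAs (n+1) v a (n+1) = (0, (WallP n v a).1.2) := by
        intro v
        simp [dWAs, WD, WD_zero n (n+1) (Nat.lt_succ_self n) v a]
      have lBs : ∀ v : ℂ, dWBs (n+1) v a (n+1) = (0, (WallP n v a).1.1) := by
        intro v
        simp [dWBs, WD, WD_zero n (n+1) (Nat.lt_succ_self n) v a]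
      have e1 : Sm n a (dWA (n+1) z a) (dWA (n+1) w a)
          = Sm n a (dWA n z a) (dWA n w a)
            + a (n+1) * w * Sm n a (dWA n z a) (dWBs n w a)
            - a (n+1) * z * Sm n a (dWA n w a) (dWBs n z a)
            + a (n+1) * z * (a (n+1) * w) * Sm n a (dWBs n z a) (dWBs n w a) := by
        simp only [Sm, Finset.mul_sum, ← Finset.sum_add_distrib, ← Finset.sum_sub_distrib]
        refine Finset.sum_congr rfl fun k hk => ?_
        have hk' : ¬ k = n + 1 := by
          have := Finset.mem_range.mp hk; omega
        simp only [dWA, dWB, dWAs, dWBs, WD, if_neg hk']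
        ring
      have e2 : Sm n a (dWB (n+1) z a) (dWB (n+1) w a)
          = Sm n a (dWB n z a) (dWB n w a)
            + a (n+1) * w * Sm n a (dWB n z a) (dWAs n w a)
            - a (n+1) * z * Sm n a (dWB n w a) (dWAs n z a)
            + a (n+1) * z * (a (n+1) * w) * Sm n a (dWAs n z a) (dWAs n w a) := by
        simp only [Sm, Finset.mul_sum, ← Finset.sum_add_distrib, ← Finset.sum_sub_distrib]
        refine Finset.sum_congr rfl fun k hk => ?_
        have hk' : ¬ k = n + 1 := by
          have := Finset.mem_range.mp hk; omega
        simp only [dWA, dWB, dWAs, dWBs, WD, if_neg hk']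
        ring
      have e3 : Sm n a (dWAs (n+1) z a) (dWAs (n+1) w a)
          = z * w * Sm n a (dWAs n z a) (dWAs n w a)
            - z * (starRingEnd ℂ) (a (n+1)) * Sm n a (dWB n w a) (dWAs n z a)
            + (starRingEnd ℂ) (a (n+1)) * w * Sm n a (dWB n z a) (dWAs n w a)
            + (starRingEnd ℂ) (a (n+1)) * (starRingEnd ℂ) (a (n+1)) * Sm n a (dWB n z a) (dWB n w a) := by
        simp only [Sm, Finset.mul_sum, ← Finset.sum_add_distrib, ← Finset.sum_sub_distrib]
        refine Finset.sum_congr rfl fun k hk => ?_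
        have hk' : ¬ k = n + 1 := by
          have := Finset.mem_range.mp hk; omega
        simp only [dWA, dWB, dWAs, dWBs, WD, if_neg hk']
        ring
      have e4 : Sm n a (dWBs (n+1) z a) (dWBs (n+1) w a)
          = z * w * Sm n a (dWBs n z a) (dWBs n w a)
            - z * (starRingEnd ℂ) (a (n+1)) * Sm n a (dWA n w a) (dWBs n z a)
            + (starRingEnd ℂ) (a (n+1)) * w * Sm n a (dWA n z a) (dWBs n w a)
            + (starRingEnd ℂ) (a (n+1)) * (starRingEnd ℂ) (a (n+1)) * Sm n a (dWA n z a) (dWA n w a) := by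
        simp only [Sm, Finset.mul_sum, ← Finset.sum_add_distrib, ← Finset.sum_sub_distrib]
        refine Finset.sum_congr rfl fun k hk => ?_
        have hk' : ¬ k = n + 1 := by
          have := Finset.mem_range.mp hk; omega
        simp only [dWA, dWB, dWAs, dWBs, WD, if_neg hk']
        ring
      have e5 : Sm n a (dWA (n+1) z a) (dWB (n+1) w a)
          = Sm n a (dWA n z a) (dWB n w a)
            + a (n+1) * w * Sm n a (dWA n z a) (dWAs n w a)
            - a (n+1) * z * Sm n a (dWB n w a) (dWBs n z a)
            - a (n+1) * z * (a (n+1) * w) * Sm n a (dWAs n w a) (dWBs n z a) := by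
        simp only [Sm, Finset.mul_sum, ← Finset.sum_add_distrib, ← Finset.sum_sub_distrib]
        refine Finset.sum_congr rfl fun k hk => ?_
        have hk' : ¬ k = n + 1 := by
          have := Finset.mem_range.mp hk; omega
        simp only [dWA, dWB, dWAs, dWBs, WD, if_neg hk']
        ring
      have e6 : Sm n a (dWA (n+1) z a) (dWBs (n+1) w a)
          = w * Sm n a (dWA n z a) (dWBs n w a)
            + (starRingEnd ℂ) (a (n+1)) * Sm n a (dWA n z a) (dWA n w a)
            + a (n+1) * z * w * Sm n a (dWBs n z a) (dWBs n w a)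
            - a (n+1) * z * (starRingEnd ℂ) (a (n+1)) * Sm n a (dWA n w a) (dWBs n z a) := by
        simp only [Sm, Finset.mul_sum, ← Finset.sum_add_distrib, ← Finset.sum_sub_distrib]
        refine Finset.sum_congr rfl fun k hk => ?_
        have hk' : ¬ k = n + 1 := by
          have := Finset.mem_range.mp hk; omega
        simp only [dWA, dWB, dWAs, dWBs, WD, if_neg hk']
        ring
      have e7 : Sm n a (dWB (n+1) z a) (dWAs (n+1) w a)
          = w * Sm n a (dWB n z a) (dWAs n w a)
            + (starRingEnd ℂ) (a (n+1)) * Sm n a (dWB n z a) (dWB n w a)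
            + a (n+1) * z * w * Sm n a (dWAs n z a) (dWAs n w a)
            - a (n+1) * z * (starRingEnd ℂ) (a (n+1)) * Sm n a (dWB n w a) (dWAs n z a) := by
        simp only [Sm, Finset.mul_sum, ← Finset.sum_add_distrib, ← Finset.sum_sub_distrib]
        refine Finset.sum_congr rfl fun k hk => ?_
        have hk' : ¬ k = n + 1 := by
          have := Finset.mem_range.mp hk; omega
        simp only [dWA, dWB, dWAs, dWBs, WD, if_neg hk']
        ring
      have e8 : Sm n a (dWAs (n+1) z a) (dWBs (n+1) w a)
          = z * w * Sm n a (dWAs n z a) (dWBs n w a)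
            - z * (starRingEnd ℂ) (a (n+1)) * Sm n a (dWA n w a) (dWAs n z a)
            + (starRingEnd ℂ) (a (n+1)) * w * Sm n a (dWB n z a) (dWBs n w a)
            - (starRingEnd ℂ) (a (n+1)) * (starRingEnd ℂ) (a (n+1)) * Sm n a (dWA n w a) (dWB n z a) := by
        simp only [Sm, Finset.mul_sum, ← Finset.sum_add_distrib, ← Finset.sum_sub_distrib]
        refine Finset.sum_congr rfl fun k hk => ?_
        have hk' : ¬ k = n + 1 := by
          have := Finset.mem_range.mp hk; omega
        simp only [dWA, dWB, dWAs, dWBs, WD, if_neg hk']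
        ring
      have e9 : Sm n a (dWA (n+1) z a) (dWAs (n+1) w a)
          = w * Sm n a (dWA n z a) (dWAs n w a)
            + (starRingEnd ℂ) (a (n+1)) * Sm n a (dWA n z a) (dWB n w a)
            - a (n+1) * z * w * Sm n a (dWAs n w a) (dWBs n z a)
            - a (n+1) * z * (starRingEnd ℂ) (a (n+1)) * Sm n a (dWB n w a) (dWBs n z a) := by
        simp only [Sm, Finset.mul_sum, ← Finset.sum_add_distrib, ← Finset.sum_sub_distrib]
        refine Finset.sum_congr rfl fun k hk => ?_
        have hk' : ¬ k = n + 1 := by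
          have := Finset.mem_range.mp hk; omega
        simp only [dWA, dWB, dWAs, dWBs, WD, if_neg hk']
        ring
      have e10 : Sm n a (dWB (n+1) z a) (dWBs (n+1) w a)
          = w * Sm n a (dWB n z a) (dWBs n w a)
            - (starRingEnd ℂ) (a (n+1)) * Sm n a (dWA n w a) (dWB n z a)
            + a (n+1) * z * w * Sm n a (dWAs n z a) (dWBs n w a)
            - a (n+1) * z * (starRingEnd ℂ) (a (n+1)) * Sm n a (dWA n w a) (dWAs n z a) := by
        simp only [Sm, Finset.mul_sum, ← Finset.sum_add_distrib, ← Finset.sum_sub_distrib]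
        refine Finset.sum_congr rfl fun k hk => ?_
        have hk' : ¬ k = n + 1 := by
          have := Finset.mem_range.mp hk; omega
        simp only [dWA, dWB, dWAs, dWBs, WD, if_neg hk']
        ring
      refine ⟨?_, ?_, ?_, ?_, ?_, ?_, ?_, ?_, ?_, ?_⟩
      · rw [Sm_succ, e1, lA z, lA w]
        simp only [WallP]
        linear_combination h1 + a (n+1) * w * h6 + a (n+1) * z * g6 + a (n+1) * z * (a (n+1) * w) * h4
      · rw [Sm_succ, e2, lB z, lB w]
        simp only [WallP]
        linear_combination h2 + a (n+1) * w * h7 + a (n+1) * z * g7 + a (n+1) * z * (a (n+1) * w) * h3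
      · rw [Sm_succ, e3, lAs z, lAs w]
        simp only [WallP]
        linear_combination z * w * h3 + z * (starRingEnd ℂ) (a (n+1)) * g7 + (starRingEnd ℂ) (a (n+1)) * w * h7 + (starRingEnd ℂ) (a (n+1)) * (starRingEnd ℂ) (a (n+1)) * h2
      · rw [Sm_succ, e4, lBs z, lBs w]
        simp only [WallP]
        linear_combination z * w * h4 + z * (starRingEnd ℂ) (a (n+1)) * g6 + (starRingEnd ℂ) (a (n+1)) * w * h6 + (starRingEnd ℂ) (a (n+1)) * (starRingEnd ℂ) (a (n+1)) * h1
      · rw [Sm_succ, e5, lA z, lB w]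
        simp only [WallP]
        linear_combination h5 + a (n+1) * w * h9 + a (n+1) * z * g10 + a (n+1) * z * (a (n+1) * w) * g8
      · rw [Sm_succ, e6, lA z, lBs w]
        simp only [WallP]
        linear_combination w * h6 + (starRingEnd ℂ) (a (n+1)) * h1 + a (n+1) * z * w * h4 + a (n+1) * z * (starRingEnd ℂ) (a (n+1)) * g6 - (z - w) * z * (WallP n z a).2.2 * (WallP n w a).1.1 * mc
      · rw [Sm_succ, e7, lB z, lAs w]
        simp only [WallP]
        linear_combination w * h7 + (starRingEnd ℂ) (a (n+1)) * h2 + a (n+1) * z * w * h3 + a (n+1) * z * (starRingEnd ℂ) (a (n+1)) * g7 - (z - w) * z * (WallP n z a).2.1 * (WallP n w a).1.2 * mc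
      · rw [Sm_succ, e8, lAs z, lBs w]
        simp only [WallP]
        linear_combination z * w * h8 + z * (starRingEnd ℂ) (a (n+1)) * g9 + (starRingEnd ℂ) (a (n+1)) * w * h10 + (starRingEnd ℂ) (a (n+1)) * (starRingEnd ℂ) (a (n+1)) * g5
      · rw [Sm_succ, e9, lA z, lAs w]
        simp only [WallP]
        linear_combination w * h9 + (starRingEnd ℂ) (a (n+1)) * h5 + a (n+1) * z * w * g8 + a (n+1) * z * (starRingEnd ℂ) (a (n+1)) * g10 - (z - w) * z * (WallP n z a).2.2 * (WallP n w a).1.2 * mc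
      · rw [Sm_succ, e10, lB z, lBs w]
        simp only [WallP]
        linear_combination w * h10 + (starRingEnd ℂ) (a (n+1)) * g5 + a (n+1) * z * w * h8 + a (n+1) * z * (starRingEnd ℂ) (a (n+1)) * g9 - (z - w) * z * (WallP n z a).2.1 * (WallP n w a).1.1 * mc

theorem poisson_A_B (n : ℕ) (z w : ℂ) (hzw : z ≠ w) (a : ℕ → ℂ) (ha : ∀ k, ‖a k‖ < 1) :
    pb (WallA n z) (WallB n w) a
        = -(Complex.I * w / (z - w)) * (WallA n z a * WallB n w a - WallA n w a * WallB n z a)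
    ∧ pb (WallA n z) (WallBStar n w) a
        = Complex.I * z / (z - w)
            * (WallA n z a * WallBStar n w a - WallA n w a * WallBStar n z a) := by
  have hne : z - w ≠ 0 := sub_ne_zero.mpr hzw
  obtain ⟨-, -, -, -, h5, h6, -, -, -, -⟩ := wall_key a n z w
  constructor
  · rw [pb_AB]
    simp only [WallA, WallB]
    field_simp
    linear_combination h5
  · rw [pb_ABs]
    simp only [WallA, WallBStar]
    field_simp
    linear_combination h6
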